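/- arXiv:0806.2674 — 2 statements merged into one kernel-verified Lean document; each statement's English description precedes it below -/
import Mathlib

section
/- Under hypotheses (H1) and (H2), for every P > 0 the limit C(P) = lim_{M→∞} C_M(P) satisfies max( ∫ log(1+P|x|²) dπ_a(x) , ∫ log(1+P|y|²) dπ_b(y) ) ≤ C(P) ≤ ∫∫ log(1+P(|x|²+|y|²)) dπ_a(x) dπ_b(y). -/
open MeasureTheory ProbabilityTheory Filter Matrix

/-- The `M × (M+1)` two-diagonal channel matrix built from the fading
coefficients `a`, `b` (indexed from `1` as in the paper). -/
def Hmat (M : ℕ) (a b : ℕ → ℂ) : Matrix (Fin M) (Fin (M + 1)) ℂ :=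
  fun i j =>
    if (j : ℕ) = (i : ℕ) then a ((i : ℕ) + 1)
    else if (j : ℕ) = (i : ℕ) + 1 then b ((i : ℕ) + 1) else 0

/-- `log det (I + P · H_M H_M*)`, the determinant being real (≥ 1). -/
noncomputable def logdetG (M : ℕ) (P : ℝ) (a b : ℕ → ℂ) : ℝ :=
  Real.log ((Matrix.det (1 + (P : ℂ) • (Hmat M a b * (Hmat M a b)ᴴ))).re)

/-!
`I + P H_M H_M*` is tridiagonal, so its determinant `D_M` satisfies a three-term recursion.
Paired with `E_M`, the same determinant with `b_M` set to `0`, it satisfies a recursion with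
nonnegative coefficients, and induction gives `∏ (1 + P|a_i|²) ≤ E_M ≤ D_M` and
`∏ (1 + P|b_i|²) ≤ D_M ≤ ∏ (1 + P|a_i|² + P|b_i|²)`. Taking logarithms and expectations, identical
distribution (and independence of `a_i` and `b_i` for the upper bound) turns these into
`M ∫ log (1 + P|x|²) dπ ≤ M C_M(P) ≤ M ∫∫ log (1 + P(|x|² + |y|²)) dπ_a dπ_b`, all finite by (H1);
divide by `M` and let `M → ∞`.
-/

def tridiagonal {R : Type*} [Zero R] (d u l : ℕ → R) (n : ℕ) : Matrix (Fin n) (Fin n) R :=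
  of fun i j =>
    if (i : ℕ) = j then d i
    else if (j : ℕ) = i + 1 then u i
    else if (i : ℕ) = j + 1 then l j else 0

section Tridiagonal

variable {R : Type*} [CommRing R] (d u l : ℕ → R)

lemma tridiagonal_submatrix_castSucc (n : ℕ) :
    (tridiagonal d u l (n + 1)).submatrix Fin.castSucc Fin.castSucc = tridiagonal d u l n := by
  ext i j; simp [tridiagonal]

lemma tridiagonal_last_apply_castSucc_castSucc {n : ℕ} (j : Fin n) :
    tridiagonal d u l (n + 2) (Fin.last (n + 1)) j.castSucc.castSucc = 0 := by
  have := j.isLt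
  simp only [tridiagonal, of_apply, Fin.val_last, Fin.val_castSucc]
  rw [if_neg (by omega), if_neg (by omega), if_neg (by omega)]

lemma det_tridiagonal_minor (n : ℕ) :
    det ((tridiagonal d u l (n + 2)).submatrix (Fin.last (n + 1)).succAbove
      (Fin.last n).castSucc.succAbove) = u n * det (tridiagonal d u l n) := by
  have hcol : (Fin.last n).castSucc.succAbove (Fin.last n) = Fin.last (n + 1) :=
    Fin.succAbove_castSucc_self _
  have hminor : ∀ j : Fin n, (Fin.last n).castSucc.succAbove j.castSucc = j.castSucc.castSucc :=
    fun j => Fin.succAbove_castSucc_of_lt _ _ (Fin.castSucc_lt_castSucc_iff.2 j.castSucc_lt_last)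
  rw [det_succ_column _ (Fin.last n), Fin.sum_univ_castSucc, Finset.sum_eq_zero fun i _ => ?_]
  · have hentry : tridiagonal d u l (n + 2) (Fin.last n).castSucc (Fin.last (n + 1)) = u n := by
      simp [tridiagonal]
    simp only [submatrix_apply, Fin.succAbove_last, hcol, hentry, submatrix_submatrix, Fin.val_last]
    rw [show (Fin.last n).castSucc.succAbove ∘ Fin.castSucc = Fin.castSucc ∘ Fin.castSucc from
      funext hminor, ← submatrix_submatrix, tridiagonal_submatrix_castSucc,
      tridiagonal_submatrix_castSucc, Even.neg_one_pow ⟨n, rfl⟩, zero_add, one_mul]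
  · have := i.isLt
    simp only [submatrix_apply, Fin.succAbove_last, hcol, tridiagonal, of_apply, Fin.val_last,
      Fin.val_castSucc]
    rw [if_neg (by omega), if_neg (by omega), if_neg (by omega), mul_zero, zero_mul]

lemma det_tridiagonal_add_two (n : ℕ) :
    det (tridiagonal d u l (n + 2)) =
      d (n + 1) * det (tridiagonal d u l (n + 1)) - l n * u n * det (tridiagonal d u l n) := by
  have hlast : tridiagonal d u l (n + 2) (Fin.last (n + 1)) (Fin.last (n + 1)) = d (n + 1) := by
    simp [tridiagonal]
  have hsub : tridiagonal d u l (n + 2) (Fin.last (n + 1)) (Fin.last n).castSucc = l n := by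
    simp [tridiagonal, show n ≠ n + 1 + 1 by omega]
  rw [det_succ_row _ (Fin.last (n + 1)), Fin.sum_univ_castSucc, Fin.sum_univ_castSucc,
    Finset.sum_eq_zero fun j _ => by rw [tridiagonal_last_apply_castSucc_castSucc]; ring,
    det_tridiagonal_minor, Fin.succAbove_last, tridiagonal_submatrix_castSucc, hlast, hsub]
  simp
  ring

end Tridiagonal

lemma Hmat_mul_conjTranspose_apply (M : ℕ) (a b : ℕ → ℂ) (i j : Fin M) :
    (Hmat M a b * (Hmat M a b)ᴴ) i j =
      a (i + 1) * starRingEnd ℂ (Hmat M a b j i.castSucc) +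
      b (i + 1) * starRingEnd ℂ (Hmat M a b j i.succ) := by
  rw [mul_apply, Fintype.sum_eq_add i.castSucc i.succ (by simp [Fin.ext_iff])]
  · simp [Hmat]
  · rintro k ⟨hi, hi'⟩
    have hk : (k : ℕ) ≠ i := fun h => hi (Fin.ext h)
    have hk' : (k : ℕ) ≠ i + 1 := fun h => hi' (Fin.ext h)
    simp [Hmat, hk, hk']

lemma one_add_smul_Hmat_mul_conjTranspose (M : ℕ) (P : ℝ) (a b : ℕ → ℂ) :
    1 + (P : ℂ) • (Hmat M a b * (Hmat M a b)ᴴ) =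
      tridiagonal (fun i => ((1 + P * ‖a (i + 1)‖ ^ 2 + P * ‖b (i + 1)‖ ^ 2 : ℝ) : ℂ))
        (fun i => P * b (i + 1) * starRingEnd ℂ (a (i + 2)))
        (fun i => P * starRingEnd ℂ (b (i + 1)) * a (i + 2)) M := by
  ext ⟨p, hp⟩ ⟨q, hq⟩
  rw [Matrix.add_apply, Matrix.smul_apply, Hmat_mul_conjTranspose_apply, one_apply]
  simp only [Hmat, tridiagonal, of_apply, Fin.val_castSucc, Fin.val_succ, Fin.mk.injEq]
  split_ifs <;> subst_vars <;> first | omega | (simp [Complex.mul_conj'] <;> ring)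

/-- For `x n = P ‖a n‖²` and `y n = P ‖b n‖²`, `(detPair x y M).1` is `det (I + P H_M H_M*)` and
`(detPair x y M).2` is the same determinant with `b M` replaced by `0`. -/
noncomputable def detPair (x y : ℕ → ℝ) : ℕ → ℝ × ℝ
  | 0 => (1, 1)
  | M + 1 =>
    ((1 + y (M + 1)) * (detPair x y M).1 + x (M + 1) * (detPair x y M).2,
      (detPair x y M).1 + x (M + 1) * (detPair x y M).2)

section DetPair

variable {x y : ℕ → ℝ}

lemma detPair_fst_add_two (M : ℕ) :
    (detPair x y (M + 2)).1 = (1 + x (M + 2) + y (M + 2)) * (detPair x y (M + 1)).1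
      - y (M + 1) * x (M + 2) * (detPair x y M).1 := by
  simp only [detPair]
  ring

lemma detPair_bounds (hx : ∀ n, 0 ≤ x n) (hy : ∀ n, 0 ≤ y n) (M : ℕ) :
    ∏ i ∈ Finset.range M, (1 + x (i + 1)) ≤ (detPair x y M).2 ∧
    (detPair x y M).2 ≤ (detPair x y M).1 ∧
    ∏ i ∈ Finset.range M, (1 + y (i + 1)) ≤ (detPair x y M).1 ∧
    (detPair x y M).1 ≤ ∏ i ∈ Finset.range M, (1 + x (i + 1) + y (i + 1)) := by
  induction M with
  | zero => simp [detPair]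
  | succ M ih =>
    obtain ⟨hE, hED, hD, hD'⟩ := ih
    have hx' := hx (M + 1)
    have hy' := hy (M + 1)
    have hprod : 0 ≤ ∏ i ∈ Finset.range M, (1 + x (i + 1)) :=
      Finset.prod_nonneg fun i _ => by linarith [hx (i + 1)]
    simp only [detPair, Finset.prod_range_succ]
    refine ⟨by nlinarith, by nlinarith, by nlinarith, by nlinarith⟩

lemma measurable_detPair {Ω : Type*} [MeasurableSpace Ω] {x y : ℕ → Ω → ℝ}
    (hx : ∀ n, Measurable (x n)) (hy : ∀ n, Measurable (y n)) (M : ℕ) :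
    Measurable fun ω => detPair (fun n => x n ω) (fun n => y n ω) M := by
  induction M with
  | zero => exact measurable_const
  | succ M ih =>
    simp only [detPair]
    exact (((measurable_const.add (hy _)).mul ih.fst).add ((hx _).mul ih.snd)).prodMk
      (ih.fst.add ((hx _).mul ih.snd))

end DetPair

lemma det_tridiagonal_eq_detPair {x y : ℕ → ℝ} {d u l : ℕ → ℂ}
    (hd : ∀ i, d i = ((1 + x (i + 1) + y (i + 1) : ℝ) : ℂ))
    (hlu : ∀ i, l i * u i = ((y (i + 1) * x (i + 2) : ℝ) : ℂ)) :
    ∀ M, det (tridiagonal d u l M) = (detPair x y M).1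
  | 0 => by simp [detPair]
  | 1 => by simp [tridiagonal, hd, detPair]; ring
  | M + 2 => by
    rw [det_tridiagonal_add_two, det_tridiagonal_eq_detPair hd hlu M,
      det_tridiagonal_eq_detPair hd hlu (M + 1), hd, hlu, detPair_fst_add_two]
    push_cast
    ring

lemma logdetG_eq_log_detPair (M : ℕ) (P : ℝ) (a b : ℕ → ℂ) :
    logdetG M P a b =
      Real.log (detPair (fun n => P * ‖a n‖ ^ 2) (fun n => P * ‖b n‖ ^ 2) M).1 := by
  rw [logdetG, one_add_smul_Hmat_mul_conjTranspose,
    det_tridiagonal_eq_detPair (x := fun n => P * ‖a n‖ ^ 2) (y := fun n => P * ‖b n‖ ^ 2)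
      (fun i => by push_cast; ring)
      (fun i => by push_cast; rw [← Complex.mul_conj', ← Complex.mul_conj']; ring),
    Complex.ofReal_re]

lemma measurable_logdetG {Ω : Type*} [MeasurableSpace Ω] {a b : ℕ → Ω → ℂ}
    (ha : ∀ n, Measurable (a n)) (hb : ∀ n, Measurable (b n)) (M : ℕ) (P : ℝ) :
    Measurable fun ω => logdetG M P (fun n => a n ω) (fun n => b n ω) := by
  simp only [logdetG_eq_log_detPair]
  exact Real.measurable_log.comp (measurable_detPair (x := fun n ω => P * ‖a n ω‖ ^ 2)
    (y := fun n ω => P * ‖b n ω‖ ^ 2) (fun n => by fun_prop) (fun n => by fun_prop) M).fst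

section LogBounds

variable {ι : Type*} {s : Finset ι} {f : ι → ℝ} {t : ℝ}

lemma sum_log_le_log_of_prod_le (hf : ∀ i ∈ s, 0 < f i) (h : ∏ i ∈ s, f i ≤ t) :
    ∑ i ∈ s, Real.log (f i) ≤ Real.log t := by
  rw [← Real.log_prod fun i hi => (hf i hi).ne']
  exact Real.log_le_log (Finset.prod_pos hf) h

lemma log_le_sum_log_of_le_prod (hf : ∀ i ∈ s, 0 < f i) (ht : 0 < t) (h : t ≤ ∏ i ∈ s, f i) :
    Real.log t ≤ ∑ i ∈ s, Real.log (f i) := by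
  rw [← Real.log_prod fun i hi => (hf i hi).ne']
  exact Real.log_le_log ht h

end LogBounds

section LogdetBounds

variable (M : ℕ) {P : ℝ} (hP : 0 ≤ P) (a b : ℕ → ℂ)
include hP

lemma detPair_norm_sq_bounds :
    let D := detPair (fun n => P * ‖a n‖ ^ 2) (fun n => P * ‖b n‖ ^ 2) M
    ∏ i ∈ Finset.range M, (1 + P * ‖a (i + 1)‖ ^ 2) ≤ D.1 ∧
    ∏ i ∈ Finset.range M, (1 + P * ‖b (i + 1)‖ ^ 2) ≤ D.1 ∧
    D.1 ≤ ∏ i ∈ Finset.range M, (1 + P * (‖a (i + 1)‖ ^ 2 + ‖b (i + 1)‖ ^ 2)) := by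
  obtain ⟨hE, hED, hD, hD'⟩ := detPair_bounds (x := fun n => P * ‖a n‖ ^ 2)
    (y := fun n => P * ‖b n‖ ^ 2) (fun n => by positivity) (fun n => by positivity) M
  refine ⟨hE.trans hED, hD, hD'.trans_eq (Finset.prod_congr rfl fun i _ => by ring)⟩

lemma sum_log_le_logdetG_left :
    ∑ i ∈ Finset.range M, Real.log (1 + P * ‖a (i + 1)‖ ^ 2) ≤ logdetG M P a b := by
  rw [logdetG_eq_log_detPair]
  exact sum_log_le_log_of_prod_le (fun i _ => by positivity)
    (detPair_norm_sq_bounds M hP a b).1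

lemma sum_log_le_logdetG_right :
    ∑ i ∈ Finset.range M, Real.log (1 + P * ‖b (i + 1)‖ ^ 2) ≤ logdetG M P a b := by
  rw [logdetG_eq_log_detPair]
  exact sum_log_le_log_of_prod_le (fun i _ => by positivity)
    (detPair_norm_sq_bounds M hP a b).2.1

lemma logdetG_nonneg : 0 ≤ logdetG M P a b :=
  (Finset.sum_nonneg fun i _ => Real.log_nonneg (by simp; positivity)).trans
    (sum_log_le_logdetG_left M hP a b)

lemma logdetG_le_sum_log :
    logdetG M P a b ≤
      ∑ i ∈ Finset.range M, Real.log (1 + P * (‖a (i + 1)‖ ^ 2 + ‖b (i + 1)‖ ^ 2)) := by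
  obtain ⟨hD, -, hD'⟩ := detPair_norm_sq_bounds M hP a b
  rw [logdetG_eq_log_detPair]
  exact log_le_sum_log_of_le_prod (fun i _ => by positivity)
    ((Finset.prod_pos fun i _ => by positivity).trans_le hD) hD'

end LogdetBounds

lemma Real.log_one_add_mul_sq_le {P t : ℝ} (hP : 0 ≤ P) (ht : 0 ≤ t) :
    Real.log (1 + P * t ^ 2) ≤ Real.log (1 + P) + 1 + Real.log t ^ 2 := by
  rcases le_or_gt t 1 with ht1 | ht1
  · have : Real.log (1 + P * t ^ 2) ≤ Real.log (1 + P) :=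
      Real.log_le_log (by positivity) (by nlinarith [pow_le_one₀ (n := 2) ht ht1])
    nlinarith [sq_nonneg (Real.log t)]
  · have hle : Real.log (1 + P * t ^ 2) ≤ Real.log (1 + P) + 2 * Real.log t := by
      rw [show 2 * Real.log t = Real.log (t ^ 2) by simp [Real.log_pow],
        ← Real.log_mul (by positivity) (by positivity)]
      exact Real.log_le_log (by positivity) (by nlinarith [one_lt_pow₀ ht1 two_ne_zero])
    nlinarith [sq_nonneg (Real.log t - 1)]

lemma Real.log_one_add_mul_add_le {P s t : ℝ} (hP : 0 ≤ P) (hs : 0 ≤ s) (ht : 0 ≤ t) :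
    Real.log (1 + P * (s + t)) ≤ Real.log (1 + P * s) + Real.log (1 + P * t) := by
  rw [← Real.log_mul (by positivity) (by positivity)]
  exact Real.log_le_log (by positivity)
    (by nlinarith [mul_nonneg (mul_nonneg hP hs) (mul_nonneg hP ht)])

section Integrability

variable {E : Type*} [NormedAddCommGroup E] [MeasurableSpace E] [OpensMeasurableSpace E]
  {P : ℝ} (hP : 0 ≤ P)
include hP

lemma integrable_log_one_add_mul_norm_sq {μ : Measure E} [IsFiniteMeasure μ]
    (h : Integrable (fun x => Real.log ‖x‖ ^ 2) μ) :
    Integrable (fun x => Real.log (1 + P * ‖x‖ ^ 2)) μ := by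
  refine ((integrable_const (Real.log (1 + P) + 1)).add h).mono'
    (Measurable.aestronglyMeasurable (by fun_prop)) (ae_of_all _ fun x => ?_)
  rw [Real.norm_of_nonneg (Real.log_nonneg (by simp; positivity))]
  exact Real.log_one_add_mul_sq_le hP (norm_nonneg x)

lemma integrable_log_one_add_mul_add_norm_sq {μ ν : Measure E} [IsFiniteMeasure μ]
    [IsFiniteMeasure ν] (hμ : Integrable (fun x => Real.log (1 + P * ‖x‖ ^ 2)) μ)
    (hν : Integrable (fun x => Real.log (1 + P * ‖x‖ ^ 2)) ν) :
    Integrable (fun p : E × E => Real.log (1 + P * (‖p.1‖ ^ 2 + ‖p.2‖ ^ 2))) (μ.prod ν) := by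
  refine ((hμ.comp_fst ν).add (hν.comp_snd μ)).mono'
    (Measurable.aestronglyMeasurable (by fun_prop)) (ae_of_all _ fun p => ?_)
  rw [Real.norm_of_nonneg (Real.log_nonneg (by simp; positivity))]
  exact Real.log_one_add_mul_add_le hP (by positivity) (by positivity)

end Integrability

section IdenticallyDistributed

variable {Ω α : Type*} [MeasurableSpace Ω] [MeasurableSpace α] {μ : Measure Ω} {ν : Measure α}
  {X : ℕ → Ω → α} {g : α → ℝ} {f : Ω → ℝ}
  (hX : ∀ n, AEMeasurable (X n) μ) (hlaw : ∀ n, μ.map (X n) = ν) (hg : Integrable g ν)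
include hX hlaw hg

lemma integrable_sum_range_comp (M : ℕ) :
    Integrable (fun ω => ∑ i ∈ Finset.range M, g (X (i + 1) ω)) μ :=
  integrable_finsetSum _ fun i _ => ((hlaw (i + 1)).symm ▸ hg).comp_aemeasurable (hX (i + 1))

lemma integral_sum_range_comp (M : ℕ) :
    ∫ ω, ∑ i ∈ Finset.range M, g (X (i + 1) ω) ∂μ = M * ∫ x, g x ∂ν := by
  rw [integral_finsetSum _ fun i _ => ((hlaw (i + 1)).symm ▸ hg).comp_aemeasurable (hX (i + 1))]
  have : ∀ n, ∫ ω, g (X n ω) ∂μ = ∫ x, g x ∂ν := fun n => by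
    rw [← hlaw n, integral_map (hX n) ((hlaw n).symm ▸ hg.aestronglyMeasurable)]
  simp [this]

lemma mul_integral_le_integral_of_sum_le {M : ℕ} (hf : Integrable f μ)
    (h : ∀ ω, ∑ i ∈ Finset.range M, g (X (i + 1) ω) ≤ f ω) :
    M * ∫ x, g x ∂ν ≤ ∫ ω, f ω ∂μ := by
  rw [← integral_sum_range_comp hX hlaw hg]
  exact integral_mono (integrable_sum_range_comp hX hlaw hg M) hf h

lemma integral_le_mul_integral_of_le_sum {M : ℕ} (hf : Integrable f μ)
    (h : ∀ ω, f ω ≤ ∑ i ∈ Finset.range M, g (X (i + 1) ω)) :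
    ∫ ω, f ω ∂μ ≤ M * ∫ x, g x ∂ν := by
  rw [← integral_sum_range_comp hX hlaw hg]
  exact integral_mono hf (integrable_sum_range_comp hX hlaw hg M) h

end IdenticallyDistributed

section Limits

variable {s : ℕ → ℝ} {C : ℝ} (hC : Tendsto (fun M : ℕ => 1 / (M : ℝ) * s M) atTop (nhds C))
include hC

lemma le_of_tendsto_one_div_mul {L : ℝ} (h : ∀ M : ℕ, M * L ≤ s M) : L ≤ C :=
  ge_of_tendsto hC (eventually_atTop.2 ⟨1, fun M hM => by
    rw [one_div, le_inv_mul_iff₀ (by positivity)]; exact h M⟩)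

lemma ge_of_tendsto_one_div_mul {U : ℝ} (h : ∀ M : ℕ, s M ≤ M * U) : C ≤ U :=
  le_of_tendsto hC (eventually_atTop.2 ⟨1, fun M hM => by
    rw [one_div, inv_mul_le_iff₀ (by positivity)]; exact h M⟩)

end Limits

theorem statement1_general
    {Ω : Type*} [MeasureSpace Ω] [IsProbabilityMeasure (ℙ : Measure Ω)]
    (πa πb : Measure ℂ) [IsProbabilityMeasure πa] [IsProbabilityMeasure πb]
    (a b : ℕ → Ω → ℂ)
    (ha_meas : ∀ n, Measurable (a n)) (hb_meas : ∀ n, Measurable (b n))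
    (ha_law : ∀ n, Measure.map (a n) ℙ = πa)
    (hb_law : ∀ n, Measure.map (b n) ℙ = πb)
    (h_indep : iIndepFun (Sum.elim a b) ℙ)
    -- (H1)
    (H1a : Integrable (fun x : ℂ => (Real.log (‖x‖)) ^ 2) πa)
    (H1b : Integrable (fun x : ℂ => (Real.log (‖x‖)) ^ 2) πb)
    (P : ℝ) (hP : 0 < P)
    (C : ℝ)
    (hC : Tendsto
      (fun M : ℕ =>
        (1 / (M : ℝ)) *
          ∫ ω, logdetG M P (fun n => a n ω) (fun n => b n ω) ∂ℙ)
      atTop (nhds C)) :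
    max (∫ x, Real.log (1 + P * ‖x‖ ^ 2) ∂πa)
        (∫ y, Real.log (1 + P * ‖y‖ ^ 2) ∂πb) ≤ C ∧
    C ≤ ∫ p : ℂ × ℂ,
          Real.log (1 + P * (‖p.1‖ ^ 2 + ‖p.2‖ ^ 2))
          ∂(πa.prod πb) := by
  have ha := fun n => (ha_meas n).aemeasurable (μ := ℙ)
  have hb := fun n => (hb_meas n).aemeasurable (μ := ℙ)
  have hab := fun n => ((ha_meas n).prodMk (hb_meas n)).aemeasurable (μ := ℙ)
  have hab_law : ∀ n, Measure.map (fun ω => (a n ω, b n ω)) ℙ = πa.prod πb := fun n => by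
    rw [← ha_law n, ← hb_law n]
    exact (h_indep.indepFun Sum.inl_ne_inr).map_prod_eq_prod_map_map (ha n) (hb n)
  have hga := integrable_log_one_add_mul_norm_sq hP.le H1a
  have hgb := integrable_log_one_add_mul_norm_sq hP.le H1b
  have hgab := integrable_log_one_add_mul_add_norm_sq hP.le hga hgb
  have hS : ∀ M, Integrable (fun ω => logdetG M P (fun n => a n ω) (fun n => b n ω)) ℙ :=
    fun M => (integrable_sum_range_comp hab hab_law hgab M).mono'
      (measurable_logdetG ha_meas hb_meas M P).aestronglyMeasurable (ae_of_all _ fun ω => by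
        rw [Real.norm_of_nonneg (logdetG_nonneg M hP.le _ _)]
        exact logdetG_le_sum_log M hP.le (fun n => a n ω) (fun n => b n ω))
  refine ⟨max_le ?_ ?_, ?_⟩
  · exact le_of_tendsto_one_div_mul hC fun M => mul_integral_le_integral_of_sum_le ha ha_law hga
      (hS M) fun ω => sum_log_le_logdetG_left M hP.le (fun n => a n ω) (fun n => b n ω)
  · exact le_of_tendsto_one_div_mul hC fun M => mul_integral_le_integral_of_sum_le hb hb_law hgb
      (hS M) fun ω => sum_log_le_logdetG_right M hP.le (fun n => a n ω) (fun n => b n ω)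
  · exact ge_of_tendsto_one_div_mul hC fun M => integral_le_mul_integral_of_le_sum hab hab_law
      hgab (hS M) fun ω => logdetG_le_sum_log M hP.le (fun n => a n ω) (fun n => b n ω)

theorem statement1
    {Ω : Type*} [MeasureSpace Ω] [IsProbabilityMeasure (ℙ : Measure Ω)]
    (πa πb : Measure ℂ) [IsProbabilityMeasure πa] [IsProbabilityMeasure πb]
    (a b : ℕ → Ω → ℂ)
    (ha_meas : ∀ n, Measurable (a n)) (hb_meas : ∀ n, Measurable (b n))
    (ha_law : ∀ n, Measure.map (a n) ℙ = πa)
    (hb_law : ∀ n, Measure.map (b n) ℙ = πb)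
    (h_indep : iIndepFun (Sum.elim a b) ℙ)
    -- (H1)
    (H1a : Integrable (fun x : ℂ => (Real.log (‖x‖)) ^ 2) πa)
    (H1b : Integrable (fun x : ℂ => (Real.log (‖x‖)) ^ 2) πb)
    -- (H2)
    (H2a : πa ≪ (volume : Measure ℂ)) (H2b : πb ≪ (volume : Measure ℂ))
    (P : ℝ) (hP : 0 < P)
    (C : ℝ)
    (hC : Tendsto
      (fun M : ℕ =>
        (1 / (M : ℝ)) *
          ∫ ω, logdetG M P (fun n => a n ω) (fun n => b n ω) ∂ℙ)
      atTop (nhds C)) :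
    max (∫ x, Real.log (1 + P * ‖x‖ ^ 2) ∂πa)
        (∫ y, Real.log (1 + P * ‖y‖ ^ 2) ∂πb) ≤ C ∧
    C ≤ ∫ p : ℂ × ℂ,
          Real.log (1 + P * (‖p.1‖ ^ 2 + ‖p.2‖ ^ 2))
          ∂(πa.prod πb) :=
  statement1_general πa πb a b ha_meas hb_meas ha_law hb_law h_indep H1a H1b P hP C hC
end

section
/- Under hypotheses (H1), (H2) and (H4), for every P > 0 the sequence C_M(P) = (1/M)·E[log det G_M] converges to a finite limit as M → ∞ (the limit is denoted C(P)). -/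
/-
Fischer's inequality, applied to the positive definite matrix `G_{M+N}` whose diagonal blocks are
`G_M` and the matrix `G_N` built from the coefficients shifted by `M`, makes `log det G_M`
pathwise subadditive up to this shift. The coefficients are independent and identically
distributed, so the shifted copy has the same law, `E log det G_M` is a subadditive sequence, and
Fekete's lemma gives the limit of its averages. Iterating the subadditivity bounds `log det G_M`
by a sum of one-row terms `log (1 + ρ Σ |h|²)`, which (H1) makes integrable.
-/

open MeasureTheory ProbabilityTheory Filter Matrix

/-- The `M × K(M+1)` two-block-diagonal channel matrix built from the fading
vectors `a`, `b` (indexed from `1` as in the paper); the column index set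
`Fin (M+1) × Fin K` encodes the `M+1` blocks of `K` columns. -/
def HmatK (K M : ℕ) (a b : ℕ → Fin K → ℂ) :
    Matrix (Fin M) (Fin (M + 1) × Fin K) ℂ :=
  fun i jk =>
    if (jk.1 : ℕ) = (i : ℕ) then a ((i : ℕ) + 1) jk.2
    else if (jk.1 : ℕ) = (i : ℕ) + 1 then b ((i : ℕ) + 1) jk.2 else 0

/-- `log det (I + (P/K) · H_M H_M*)`, the determinant being real (≥ 1). -/
noncomputable def logdetGK (K M : ℕ) (P : ℝ) (a b : ℕ → Fin K → ℂ) : ℝ :=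
  Real.log
    ((Matrix.det
      (1 + ((P / K : ℝ) : ℂ) • (HmatK K M a b * (HmatK K M a b)ᴴ))).re)

open scoped ComplexOrder

namespace Matrix

variable {𝕜 : Type*} [RCLike 𝕜] {m n : Type*} [Fintype m] [DecidableEq m] [Fintype n]
  [DecidableEq n]

lemma PosSemidef.one_le_det_one_add {S : Matrix n n 𝕜} (hS : S.PosSemidef) :
    1 ≤ (1 + S).det := by
  have hconj : 1 + S = Unitary.conjStarAlgAut 𝕜 _ hS.isHermitian.eigenvectorUnitary
      (diagonal fun i => 1 + (hS.isHermitian.eigenvalues i : 𝕜)) := by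
    conv_lhs => rw [hS.isHermitian.spectral_theorem]
    rw [← map_one (Unitary.conjStarAlgAut 𝕜 _ hS.isHermitian.eigenvectorUnitary), ← map_add,
      ← diagonal_one, diagonal_add]
    rfl
  rw [hconj, Unitary.conjStarAlgAut_apply, det_mul_comm, ← mul_assoc, Unitary.coe_star_mul_self,
    one_mul, det_diagonal]
  exact Finset.one_le_prod fun i _ =>
    le_add_of_nonneg_right (by exact_mod_cast hS.eigenvalues_nonneg i)

open scoped MatrixOrder in
lemma PosDef.det_le_det_add {X S : Matrix n n 𝕜} (hX : X.PosDef) (hS : S.PosSemidef) :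
    X.det ≤ (X + S).det := by
  set Q := CFC.sqrt X
  have hQQ : Q * Q = X := CFC.sqrt_mul_sqrt_self X hX.posSemidef.nonneg
  have hQ : IsUnit Q.det := isUnit_iff_ne_zero.mpr fun h => hX.det_pos.ne' <| by
    rw [← hQQ, det_mul, h, zero_mul]
  have hQinv : (Q⁻¹)ᴴ = Q⁻¹ := by
    rw [conjTranspose_nonsing_inv, (CFC.sqrt_nonneg X).posSemidef.isHermitian.eq]
  have hsplit : X + S = Q * (1 + Q⁻¹ * S * Q⁻¹) * Q := by
    rw [mul_add, add_mul, mul_one, hQQ, ← Matrix.mul_assoc, ← Matrix.mul_assoc,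
      mul_nonsing_inv _ hQ, one_mul, Matrix.mul_assoc, nonsing_inv_mul _ hQ, mul_one]
  have hT : (Q⁻¹ * S * Q⁻¹).PosSemidef := by
    simpa only [hQinv] using hS.mul_mul_conjTranspose_same Q⁻¹
  calc X.det = X.det * 1 := (mul_one _).symm
    _ ≤ X.det * (1 + Q⁻¹ * S * Q⁻¹).det := by
      gcongr
      · exact hX.det_pos.le
      · exact hT.one_le_det_one_add
    _ = (X + S).det := by rw [hsplit, det_mul, det_mul, ← hQQ, det_mul]; ring

open scoped MatrixOrder in
lemma PosSemidef.det_le_det_of_le {A B : Matrix n n 𝕜} (hA : A.PosSemidef) (hAB : A ≤ B) :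
    A.det ≤ B.det := by
  by_cases h : A.det = 0
  · rw [h]
    exact (nonneg_iff_posSemidef.mp (hA.nonneg.trans hAB)).det_nonneg
  · simpa using (hA.posDef_iff_det_ne_zero.mpr h).det_le_det_add hAB

open scoped MatrixOrder in
/-- **Fischer's inequality**. -/
lemma PosDef.det_le_det_toBlocks₁₁_mul {G : Matrix (m ⊕ n) (m ⊕ n) 𝕜} (hG : G.PosDef) :
    G.det ≤ G.toBlocks₁₁.det * G.toBlocks₂₂.det := by
  set A := G.toBlocks₁₁
  set B := G.toBlocks₁₂
  set D := G.toBlocks₂₂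
  have hblocks : G = fromBlocks A B Bᴴ D := by
    conv_lhs => rw [← fromBlocks_toBlocks G]
    congr
    ext i j
    exact (hG.isHermitian.apply (Sum.inr i) (Sum.inl j)).symm
  have hA : A.PosDef := hG.submatrix Sum.inl_injective
  have : Invertible A := hA.isUnit.invertible
  have hSchur : (D - Bᴴ * A⁻¹ * B).PosSemidef :=
    (PosDef.fromBlocks₁₁ B D hA).mp (hblocks ▸ hG.posSemidef)
  have hle : D - Bᴴ * A⁻¹ * B ≤ D := by
    rw [le_iff, sub_sub_cancel]
    exact hA.inv.posSemidef.conjTranspose_mul_mul_same B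
  calc G.det = A.det * (D - Bᴴ * A⁻¹ * B).det := by
        rw [hblocks, det_fromBlocks₁₁, invOf_eq_nonsing_inv]
    _ ≤ A.det * D.det := by
        gcongr
        · exact hA.det_pos.le
        · exact hSchur.det_le_det_of_le hle

lemma PosDef.det_le_det_submatrix_castAdd_mul {M N : ℕ}
    {G : Matrix (Fin (M + N)) (Fin (M + N)) 𝕜} (hG : G.PosDef) :
    G.det ≤ (G.submatrix (Fin.castAdd N) (Fin.castAdd N)).det *
      (G.submatrix (Fin.natAdd M) (Fin.natAdd M)).det := by
  have h := (hG.submatrix finSumFinEquiv.injective).det_le_det_toBlocks₁₁_mul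
  simp only [det_submatrix_equiv_self, toBlocks₁₁, toBlocks₂₂, submatrix_apply,
    finSumFinEquiv_apply_left, finSumFinEquiv_apply_right] at h
  exact h

end Matrix

lemma Real.log_one_add_le_add {x y z : ℝ} (hx : 0 ≤ x) (hy : 0 ≤ y) (hz : 0 ≤ z)
    (h : z ≤ x + y + x * y) : Real.log (1 + z) ≤ Real.log (1 + x) + Real.log (1 + y) := by
  rw [← Real.log_mul (by linarith) (by linarith)]
  exact Real.log_le_log (by linarith) (by linarith)

lemma Real.log_one_add_sq_le (x : ℝ) :
    Real.log (1 + x ^ 2) ≤ Real.log 2 + 1 + Real.log x ^ 2 := by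
  rw [← Real.log_abs x, ← sq_abs x]
  rcases le_or_gt |x| 1 with h | h
  · have : Real.log (1 + |x| ^ 2) ≤ Real.log 2 :=
      Real.log_le_log (by positivity) (by nlinarith [abs_nonneg x])
    nlinarith [sq_nonneg (Real.log |x|)]
  · have : Real.log (1 + |x| ^ 2) ≤ Real.log 2 + 2 * Real.log |x| := by
      rw [← Real.log_rpow (by linarith), ← Real.log_mul (by norm_num) (by positivity)]
      exact Real.log_le_log (by positivity) (by norm_cast; nlinarith)
    nlinarith [sq_nonneg (Real.log |x| - 1)]

lemma ProbabilityTheory.iIndepFun.identDistrib_comp_of_injective {ι ι' Ω β : Type*}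
    [MeasurableSpace Ω] [MeasurableSpace β] {μ : Measure Ω} {Z : ι → Ω → β}
    (hZ : ∀ i, Measurable (Z i)) (h : iIndepFun Z μ) {g₁ g₂ : ι' → ι}
    (hg₁ : g₁.Injective) (hg₂ : g₂.Injective)
    (hlaw : ∀ i, μ.map (Z (g₁ i)) = μ.map (Z (g₂ i))) :
    IdentDistrib (fun ω i => Z (g₁ i) ω) (fun ω i => Z (g₂ i) ω) μ μ where
  aemeasurable_fst := (measurable_pi_lambda _ fun i => hZ (g₁ i)).aemeasurable
  aemeasurable_snd := (measurable_pi_lambda _ fun i => hZ (g₂ i)).aemeasurable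
  map_eq := by
    rw [(h.precomp hg₁).map_fun_eq_infinitePi_map fun i => hZ _,
      (h.precomp hg₂).map_fun_eq_infinitePi_map fun i => hZ _]
    simp_rw [hlaw]

lemma exists_tendsto_integral_div_of_subadditive {Ω : Type*} [MeasurableSpace Ω] {μ : Measure Ω}
    {Y : ℕ → ℕ → Ω → ℝ} (hY_nonneg : ∀ N m ω, 0 ≤ Y N m ω)
    (hY_int : ∀ N m, Integrable (Y N m) μ)
    (hY_stat : ∀ N m, ∫ ω, Y N m ω ∂μ = ∫ ω, Y N 0 ω ∂μ)
    (hY_sub : ∀ M N ω, Y (M + N) 0 ω ≤ Y M 0 ω + Y N M ω) :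
    ∃ L, Tendsto (fun M : ℕ => (1 / (M : ℝ)) * ∫ ω, Y M 0 ω ∂μ) atTop (nhds L) := by
  have hsub : Subadditive fun N => ∫ ω, Y N 0 ω ∂μ := fun M N =>
    calc ∫ ω, Y (M + N) 0 ω ∂μ ≤ ∫ ω, (Y M 0 ω + Y N M ω) ∂μ :=
          integral_mono (hY_int _ _) ((hY_int M 0).add (hY_int N M)) (hY_sub M N)
      _ = (∫ ω, Y M 0 ω ∂μ) + ∫ ω, Y N 0 ω ∂μ := by
          rw [integral_add (hY_int M 0) (hY_int N M), hY_stat N M]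
  have hbdd : BddBelow (Set.range fun N : ℕ => (∫ ω, Y N 0 ω ∂μ) / N) :=
    ⟨0, by
      rintro _ ⟨N, rfl⟩
      exact div_nonneg (integral_nonneg (hY_nonneg N 0)) N.cast_nonneg⟩
  exact ⟨hsub.lim, (hsub.tendsto_lim hbdd).congr fun M => by ring⟩

section Channel
variable {K : ℕ}

/-- Row `i` of `HmatK K M a b`, with the column block `l` ranging over all of `ℕ`; it does not
depend on `M`, which is what lets the Gram matrices of different sizes be compared. -/
def channelRow (a b : ℕ → Fin K → ℂ) (i l : ℕ) (k : Fin K) : ℂ :=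
  if l = i then a (i + 1) k else if l = i + 1 then b (i + 1) k else 0

def channelGram (a b : ℕ → Fin K → ℂ) (i j : ℕ) : ℂ :=
  ∑ l ∈ {i, i + 1}, ∑ k, channelRow a b i l k * star (channelRow a b j l k)

lemma channelRow_eq_zero {a b : ℕ → Fin K → ℂ} {i l : ℕ} (h₁ : l ≠ i)
    (h₂ : l ≠ i + 1) (k : Fin K) : channelRow a b i l k = 0 := by
  simp [channelRow, h₁, h₂]

lemma HmatK_mul_conjTranspose_apply (M : ℕ) (a b : ℕ → Fin K → ℂ) (i j : Fin M) :
    (HmatK K M a b * (HmatK K M a b)ᴴ) i j = channelGram a b i j := by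
  rw [mul_apply, Fintype.sum_prod_type]
  refine (Fin.sum_univ_eq_sum_range
    (fun l => ∑ k, channelRow a b i l k * star (channelRow a b j l k)) (M + 1)).trans
    (Finset.sum_subset ?_ fun l _ hl => ?_).symm
  · intro l hl
    simp only [Finset.mem_insert, Finset.mem_singleton] at hl
    simp only [Finset.mem_range]
    omega
  · simp only [Finset.mem_insert, Finset.mem_singleton, not_or] at hl
    simp [channelRow_eq_zero hl.1 hl.2]

lemma channelRow_shift (a b : ℕ → Fin K → ℂ) (m i l : ℕ) (k : Fin K) :
    channelRow (fun n => a (n + m)) (fun n => b (n + m)) i l k =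
      channelRow a b (i + m) (l + m) k := by
  unfold channelRow
  split_ifs <;> first | omega | simp only [Nat.add_right_comm]

lemma channelGram_shift (a b : ℕ → Fin K → ℂ) (m i j : ℕ) :
    channelGram (fun n => a (n + m)) (fun n => b (n + m)) i j =
      channelGram a b (i + m) (j + m) := by
  unfold channelGram
  rw [Finset.sum_pair (by omega), Finset.sum_pair (by omega)]
  simp only [channelRow_shift, Nat.add_right_comm i 1 m]

end Channel

noncomputable def GmatK (K M : ℕ) (P : ℝ) (a b : ℕ → Fin K → ℂ) :
    Matrix (Fin M) (Fin M) ℂ :=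
  1 + ((P / K : ℝ) : ℂ) • (HmatK K M a b * (HmatK K M a b)ᴴ)

section LogDet
variable {K : ℕ} {P : ℝ}

lemma GmatK_submatrix_castAdd (M N : ℕ) (a b : ℕ → Fin K → ℂ) :
    (GmatK K (M + N) P a b).submatrix (Fin.castAdd N) (Fin.castAdd N) =
      GmatK K M P a b := by
  ext i j
  simp [GmatK, one_apply, HmatK_mul_conjTranspose_apply]

lemma GmatK_submatrix_natAdd (M N : ℕ) (a b : ℕ → Fin K → ℂ) :
    (GmatK K (M + N) P a b).submatrix (Fin.natAdd M) (Fin.natAdd M) =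
      GmatK K N P (fun n => a (n + M)) (fun n => b (n + M)) := by
  ext i j
  simp only [GmatK, submatrix_apply, Matrix.add_apply, Matrix.smul_apply,
    HmatK_mul_conjTranspose_apply, channelGram_shift, Fin.val_natAdd]
  simp [one_apply, Nat.add_comm]

lemma posSemidef_smul_HmatK_mul_conjTranspose (hP : 0 ≤ P) (M : ℕ)
    (a b : ℕ → Fin K → ℂ) :
    (((P / K : ℝ) : ℂ) • (HmatK K M a b * (HmatK K M a b)ᴴ)).PosSemidef :=
  (posSemidef_self_mul_conjTranspose _).smul (by exact_mod_cast div_nonneg hP K.cast_nonneg)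

lemma GmatK_posDef (hP : 0 ≤ P) (M : ℕ) (a b : ℕ → Fin K → ℂ) :
    (GmatK K M P a b).PosDef :=
  PosDef.one.add_posSemidef (posSemidef_smul_HmatK_mul_conjTranspose hP M a b)

lemma one_le_det_GmatK (hP : 0 ≤ P) (M : ℕ) (a b : ℕ → Fin K → ℂ) :
    1 ≤ (GmatK K M P a b).det :=
  (posSemidef_smul_HmatK_mul_conjTranspose hP M a b).one_le_det_one_add

lemma one_le_re_det_GmatK (hP : 0 ≤ P) (M : ℕ) (a b : ℕ → Fin K → ℂ) :
    1 ≤ (GmatK K M P a b).det.re := by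
  simpa using (Complex.le_def.mp (one_le_det_GmatK hP M a b)).1

lemma im_det_GmatK (hP : 0 ≤ P) (M : ℕ) (a b : ℕ → Fin K → ℂ) :
    (GmatK K M P a b).det.im = 0 := by
  simpa [eq_comm] using (Complex.le_def.mp (one_le_det_GmatK hP M a b)).2

lemma logdetGK_eq (M : ℕ) (a b : ℕ → Fin K → ℂ) :
    logdetGK K M P a b = Real.log (GmatK K M P a b).det.re := rfl

lemma logdetGK_nonneg (hP : 0 ≤ P) (M : ℕ) (a b : ℕ → Fin K → ℂ) :
    0 ≤ logdetGK K M P a b :=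
  Real.log_nonneg (one_le_re_det_GmatK hP M a b)

lemma logdetGK_add_le (hP : 0 ≤ P) (M N : ℕ) (a b : ℕ → Fin K → ℂ) :
    logdetGK K (M + N) P a b ≤
      logdetGK K M P a b + logdetGK K N P (fun n => a (n + M)) (fun n => b (n + M)) := by
  have h := (GmatK_posDef hP (M + N) a b).det_le_det_submatrix_castAdd_mul
  rw [GmatK_submatrix_castAdd, GmatK_submatrix_natAdd] at h
  have h' := (Complex.le_def.mp h).1
  simp only [Complex.mul_re, im_det_GmatK hP, mul_zero, sub_zero] at h'
  have h₁ := one_le_re_det_GmatK hP M a b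
  have h₂ := one_le_re_det_GmatK hP N (fun n => a (n + M)) (fun n => b (n + M))
  rw [logdetGK_eq, logdetGK_eq, logdetGK_eq, ← Real.log_mul (by linarith) (by linarith)]
  exact Real.log_le_log (by linarith [one_le_re_det_GmatK hP (M + N) a b]) h'

lemma logdetGK_le_sum_one (hP : 0 ≤ P) (N : ℕ) (a b : ℕ → Fin K → ℂ) :
    logdetGK K N P a b ≤
      ∑ i ∈ Finset.range N, logdetGK K 1 P (fun n => a (n + i)) (fun n => b (n + i)) := by
  induction N with
  | zero => simp [logdetGK_eq, GmatK]
  | succ N ih =>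
    rw [Finset.sum_range_succ]
    exact (logdetGK_add_le hP N 1 a b).trans (by gcongr)

lemma logdetGK_one (a b : ℕ → Fin K → ℂ) :
    logdetGK K 1 P a b = Real.log (1 + P / K * ∑ jk, ‖HmatK K 1 a b 0 jk‖ ^ 2) := by
  rw [logdetGK_eq, GmatK, det_unique]
  simp [mul_apply, Complex.mul_conj, Complex.normSq_eq_norm_sq, -Complex.ofReal_pow]

lemma logdetGK_one_le (hP : 0 ≤ P) (a b : ℕ → Fin K → ℂ) :
    logdetGK K 1 P a b ≤
      Real.log (1 + P / K) + ∑ jk, (Real.log 2 + 1 + Real.log ‖HmatK K 1 a b 0 jk‖ ^ 2) := by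
  set H := HmatK K 1 a b
  have hρ : 0 ≤ P / K := div_nonneg hP K.cast_nonneg
  have hs : 0 ≤ ∑ jk, ‖H 0 jk‖ ^ 2 := by positivity
  calc logdetGK K 1 P a b = Real.log (1 + P / K * ∑ jk, ‖H 0 jk‖ ^ 2) := logdetGK_one a b
    _ ≤ Real.log (1 + P / K) + Real.log (1 + ∑ jk, ‖H 0 jk‖ ^ 2) :=
      Real.log_one_add_le_add hρ hs (by positivity) (by nlinarith)
    _ ≤ Real.log (1 + P / K) + ∑ jk, Real.log (1 + ‖H 0 jk‖ ^ 2) := by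
      gcongr
      exact Finset.le_sum_of_subadditive_on_pred (fun x => Real.log (1 + x)) (0 ≤ ·) (by simp)
        (fun x y hx hy => Real.log_one_add_le_add hx hy (by positivity) (by nlinarith))
        (fun x y hx hy => add_nonneg hx hy) _ fun jk _ => sq_nonneg _
    _ ≤ _ := by
      gcongr with jk
      exact Real.log_one_add_sq_le _

end LogDet

/-- Index set of the fading coefficients: `inl (n, k)` stands for `a n k`, `inr (n, k)` for
`b n k`. -/
abbrev FadingIdx (K : ℕ) : Type := (ℕ × Fin K) ⊕ (ℕ × Fin K)

section Sequences
variable {K : ℕ}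

def shiftIdx (m : ℕ) : FadingIdx K → FadingIdx K :=
  Sum.map (fun p => (p.1 + m, p.2)) (fun p => (p.1 + m, p.2))

lemma shiftIdx_injective (m : ℕ) : Function.Injective (shiftIdx (K := K) m) := by
  have h : Function.Injective fun p : ℕ × Fin K => (p.1 + m, p.2) :=
    fun p q hpq => by
      simp only [Prod.mk.injEq, add_left_inj] at hpq
      exact Prod.ext hpq.1 hpq.2
  exact h.sumMap h

noncomputable def logdetSeq (K N : ℕ) (P : ℝ) (z : FadingIdx K → ℂ) : ℝ :=
  logdetGK K N P (fun n k => z (.inl (n, k))) (fun n k => z (.inr (n, k)))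

lemma measurable_logdetSeq (N : ℕ) (P : ℝ) : Measurable (logdetSeq K N P) := by
  have hH : Continuous fun z : FadingIdx K → ℂ =>
      HmatK K N (fun n k => z (.inl (n, k))) (fun n k => z (.inr (n, k))) := by
    refine continuous_matrix fun i jk => ?_
    unfold HmatK
    split_ifs <;> fun_prop
  have hdet : Continuous fun z : FadingIdx K → ℂ => (GmatK K N P
      (fun n k => z (.inl (n, k))) (fun n k => z (.inr (n, k)))).det := by
    unfold GmatK
    fun_prop
  exact Real.measurable_log.comp (Complex.measurable_re.comp hdet.measurable)

lemma integrable_logdetSeq_one {Ω : Type*} [MeasurableSpace Ω] {μ : Measure Ω}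
    [IsFiniteMeasure μ] {P : ℝ} (hP : 0 ≤ P) {X : Ω → FadingIdx K → ℂ}
    (hX : Measurable X)
    (hlog : ∀ i, Integrable (fun ω => Real.log ‖X ω i‖ ^ 2) μ) :
    Integrable (fun ω => logdetSeq K 1 P (X ω)) μ := by
  set H : Ω → Matrix (Fin 1) (Fin 2 × Fin K) ℂ := fun ω =>
    HmatK K 1 (fun n k => X ω (.inl (n, k))) (fun n k => X ω (.inr (n, k))) with hH_def
  have hH : ∀ jk, Integrable (fun ω => Real.log ‖H ω 0 jk‖ ^ 2) μ := by
    intro jk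
    simp only [hH_def, HmatK]
    split_ifs
    · exact hlog _
    · exact hlog _
    · simp
  have hbound : Integrable (fun ω => Real.log (1 + P / K) +
      ∑ jk, (Real.log 2 + 1 + Real.log ‖H ω 0 jk‖ ^ 2)) μ :=
    (integrable_const _).add (integrable_finsetSum _ fun jk _ => (integrable_const _).add (hH jk))
  exact hbound.mono' ((measurable_logdetSeq 1 P).comp hX).aestronglyMeasurable <|
    ae_of_all _ fun ω =>
      (Real.norm_of_nonneg (logdetGK_nonneg hP 1 _ _)).trans_le (logdetGK_one_le hP _ _)

end Sequences

theorem statement4_general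
    {Ω : Type*} [MeasureSpace Ω] [IsProbabilityMeasure (ℙ : Measure Ω)]
    (K : ℕ)
    (πa πb : Measure ℂ)
    (a b : ℕ → Fin K → Ω → ℂ)
    (ha_meas : ∀ n k, Measurable (a n k)) (hb_meas : ∀ n k, Measurable (b n k))
    (ha_law : ∀ n k, Measure.map (a n k) ℙ = πa)
    (hb_law : ∀ n k, Measure.map (b n k) ℙ = πb)
    (h_indep : iIndepFun
      (Sum.elim (fun p : ℕ × Fin K => a p.1 p.2) (fun p : ℕ × Fin K => b p.1 p.2)) ℙ)
    -- (H1)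
    (H1a : Integrable (fun x : ℂ => (Real.log (‖x‖)) ^ 2) πa)
    (H1b : Integrable (fun x : ℂ => (Real.log (‖x‖)) ^ 2) πb)
    (P : ℝ) (hP : 0 < P) :
    ∃ L : ℝ, Tendsto
      (fun M : ℕ =>
        (1 / (M : ℝ)) *
          ∫ ω, logdetGK K M P (fun n k => a n k ω) (fun n k => b n k ω) ∂ℙ)
      atTop (nhds L) := by
  set Z : FadingIdx K → Ω → ℂ := Sum.elim (fun p => a p.1 p.2) (fun p => b p.1 p.2)
  have hZ : ∀ i, Measurable (Z i) :=
    Sum.rec (fun p => ha_meas p.1 p.2) (fun p => hb_meas p.1 p.2)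
  let X : ℕ → Ω → FadingIdx K → ℂ := fun m ω i => Z (shiftIdx m i) ω
  have hX_meas : ∀ m, Measurable (X m) := fun m => measurable_pi_lambda _ fun i => hZ _
  have hX : ∀ m, IdentDistrib (X m) (X 0) ℙ ℙ := fun m =>
    h_indep.identDistrib_comp_of_injective hZ (shiftIdx_injective m) (shiftIdx_injective 0) <| by
      rintro (⟨n, k⟩ | ⟨n, k⟩) <;> simp [Z, shiftIdx, ha_law, hb_law]
  let Y : ℕ → ℕ → Ω → ℝ := fun N m ω => logdetSeq K N P (X m ω)
  have hY : ∀ N m, IdentDistrib (Y N m) (Y N 0) ℙ ℙ := fun N m =>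
    (hX m).comp (measurable_logdetSeq N P)
  have hlog : ∀ i, Integrable (fun ω => Real.log ‖X 0 ω i‖ ^ 2) ℙ := by
    rintro (⟨n, k⟩ | ⟨n, k⟩)
    · exact (ha_law n k ▸ H1a).comp_measurable (ha_meas n k)
    · exact (hb_law n k ▸ H1b).comp_measurable (hb_meas n k)
  have hY_one : ∀ m, Integrable (Y 1 m) ℙ := fun m =>
    (hY 1 m).integrable_iff.mpr (integrable_logdetSeq_one hP.le (hX_meas 0) hlog)
  have hY_int : ∀ N m, Integrable (Y N m) ℙ := fun N m =>
    (hY N m).integrable_iff.mpr <| (integrable_finsetSum _ fun i _ => hY_one i).mono'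
      ((measurable_logdetSeq N P).comp (hX_meas 0)).aestronglyMeasurable <| ae_of_all _ fun ω =>
        (Real.norm_of_nonneg (logdetGK_nonneg hP.le N _ _)).trans_le
          (logdetGK_le_sum_one hP.le N _ _)
  exact exists_tendsto_integral_div_of_subadditive (Y := Y)
    (fun N m ω => logdetGK_nonneg hP.le N _ _) hY_int (fun N m => (hY N m).integral_eq)
    (fun M N ω => logdetGK_add_le hP.le M N _ _)

theorem statement4
    {Ω : Type*} [MeasureSpace Ω] [IsProbabilityMeasure (ℙ : Measure Ω)]
    (K : ℕ) (hK : 1 < K)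
    (πa πb : Measure ℂ) [IsProbabilityMeasure πa] [IsProbabilityMeasure πb]
    (a b : ℕ → Fin K → Ω → ℂ)
    (ha_meas : ∀ n k, Measurable (a n k)) (hb_meas : ∀ n k, Measurable (b n k))
    (ha_law : ∀ n k, Measure.map (a n k) ℙ = πa)
    (hb_law : ∀ n k, Measure.map (b n k) ℙ = πb)
    (h_indep : iIndepFun
      (Sum.elim (fun p : ℕ × Fin K => a p.1 p.2) (fun p : ℕ × Fin K => b p.1 p.2)) ℙ)
    -- (H1)
    (H1a : Integrable (fun x : ℂ => (Real.log (‖x‖)) ^ 2) πa)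
    (H1b : Integrable (fun x : ℂ => (Real.log (‖x‖)) ^ 2) πb)
    -- (H2)
    (H2a : πa ≪ (volume : Measure ℂ)) (H2b : πb ≪ (volume : Measure ℂ))
    -- (H4)
    (H4 : ∃ (c : ℂ) (r : ℝ),
      volume.restrict (Metric.ball c r)ᶜ ≪ πa ∧
      volume.restrict (Metric.ball c r)ᶜ ≪ πb)
    (P : ℝ) (hP : 0 < P) :
    ∃ L : ℝ, Tendsto
      (fun M : ℕ =>
        (1 / (M : ℝ)) *
          ∫ ω, logdetGK K M P (fun n k => a n k ω) (fun n k => b n k ω) ∂ℙ)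
      atTop (nhds L) :=
  statement4_general K πa πb a b ha_meas hb_meas ha_law hb_law h_indep H1a H1b P hP
end
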